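/- For a positive long root β, the depth of β, defined as the minimal integer k such that there exists w ∈ W of length k with w(β) < 0, equals ht∨(β), the height of the coroot β∨; for a positive short root β, the depth of β equals its height ht(β). -/

import Mathlib

open scoped RealInnerProductSpace Classical

noncomputable section

variable {V : Type} [NormedAddCommGroup V] [InnerProductSpace ℝ V] [FiniteDimensional ℝ V]

/-- The orthogonal reflection of `V` in the hyperplane orthogonal to `α`
(the reflection `s_α` when `α` is a root). -/
def sref (α : V) : V ≃ₗᵢ[ℝ] V := (Submodule.span ℝ {α})ᗮ.reflection

/-- The pairing `⟨β, γ∨⟩ = 2(β|γ)/(γ|γ)` of a vector with the coroot of `γ`. -/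
def cpair (β γ : V) : ℝ := 2 * ⟪β, γ⟫ / ⟪γ, γ⟫

/-- An irreducible reduced (crystallographic) root system in the real inner product
space `V`, the inner product being invariant under the Weyl group (automatic, since
reflections are isometries), normalized so that the shortest roots have squared length `1`. -/
structure NRootSystem (V : Type) [NormedAddCommGroup V] [InnerProductSpace ℝ V]
    [FiniteDimensional ℝ V] where
  Φ : Finset V
  nonempty : Φ.Nonempty
  zero_not_mem : (0 : V) ∉ Φ
  span_eq_top : Submodule.span ℝ (Φ : Set V) = ⊤
  reduced : ∀ α ∈ Φ, ∀ t : ℝ, t • α ∈ Φ → t = 1 ∨ t = -1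
  pairing_int : ∀ α ∈ Φ, ∀ β ∈ Φ, ∃ n : ℤ, 2 * ⟪β, α⟫ = n * ⟪α, α⟫
  reflect_mem : ∀ α ∈ Φ, ∀ β ∈ Φ, sref α β ∈ Φ
  irreducible : ∀ S : Finset V, S ⊆ Φ → S.Nonempty → (Φ \ S).Nonempty →
    ∃ α ∈ S, ∃ β ∈ Φ \ S, ⟪α, β⟫ ≠ 0
  norm_one_le : ∀ α ∈ Φ, 1 ≤ ⟪α, α⟫
  exists_norm_one : ∃ α ∈ Φ, ⟪α, α⟫ = 1

namespace NRootSystem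

variable (R : NRootSystem V)

/-- `r`, the maximal squared length of a root. -/
def r : ℝ := R.Φ.sup' R.nonempty fun α => ⟪α, α⟫

/-- long roots -/
def IsLong (α : V) : Prop := α ∈ R.Φ ∧ ⟪α, α⟫ = R.r

/-- short roots -/
def IsShort (α : V) : Prop := α ∈ R.Φ ∧ ⟪α, α⟫ < R.r

/-- The Weyl group `W`, generated by the reflections in the roots. -/
def Weyl : Subgroup (V ≃ₗᵢ[ℝ] V) := Subgroup.closure (sref '' (R.Φ : Set V))

end NRootSystem

/-- The standard parabolic subgroup `W_I` generated by the reflections in `I ⊆ Δ`. -/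
def WeylP (I : Finset V) : Subgroup (V ≃ₗᵢ[ℝ] V) := Subgroup.closure (sref '' (I : Set V))

/-- A base (set of simple roots) `Δ` of the root system, together with the
integral coordinates `coeff γ α` of each root `γ` in the basis `Δ`; every root is a
nonnegative or a nonpositive integral combination of the simple roots. -/
structure Base {V : Type} [NormedAddCommGroup V] [InnerProductSpace ℝ V]
    [FiniteDimensional ℝ V] (R : NRootSystem V) where
  Δ : Finset V
  subset : Δ ⊆ R.Φ
  indep : LinearIndependent ℝ (fun a : {x : V // x ∈ Δ} => (a : V))
  coeff : V → V → ℤ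
  coeff_spec : ∀ γ ∈ R.Φ, γ = ∑ α ∈ Δ, (coeff γ α : ℝ) • α
  coeff_sign : ∀ γ ∈ R.Φ, (∀ α ∈ Δ, 0 ≤ coeff γ α) ∨ (∀ α ∈ Δ, coeff γ α ≤ 0)

namespace Base

variable {R : NRootSystem V} (B : Base R)

/-- positive roots -/
def IsPos (γ : V) : Prop := γ ∈ R.Φ ∧ ∀ α ∈ B.Δ, 0 ≤ B.coeff γ α

/-- negative roots -/
def IsNeg (γ : V) : Prop := γ ∈ R.Φ ∧ ∀ α ∈ B.Δ, B.coeff γ α ≤ 0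

/-- the height of a root -/
def ht (γ : V) : ℤ := ∑ α ∈ B.Δ, B.coeff γ α

/-- the dual height `ht∨ γ = ht (γ∨)`: the height of the coroot `γ∨ = 2γ/(γ|γ)`
with respect to the basis of simple coroots `α∨ = 2α/(α|α)`, `α ∈ Δ`. -/
def htv (γ : V) : ℝ := ∑ α ∈ B.Δ, (B.coeff γ α : ℝ) * ⟪α, α⟫ / ⟪γ, γ⟫

/-- The length of `w`: the minimal length of an expression of `w` as a product of
simple reflections. -/
def len (w : V ≃ₗᵢ[ℝ] V) : ℕ :=
  sInf {n | ∃ g : Fin n → V, (∀ i, g i ∈ B.Δ) ∧ w = (List.ofFn fun i => sref (g i)).prod}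

/-- `w` is the longest element of the subgroup `H`. -/
def IsLongest (H : Subgroup (V ≃ₗᵢ[ℝ] V)) (w : V ≃ₗᵢ[ℝ] V) : Prop :=
  w ∈ H ∧ ∀ u ∈ H, B.len u ≤ B.len w

/-- `X_I = {w ∈ W | w(Φ_I⁺) ⊆ Φ⁺}`, the set of minimal length coset
representatives of `W/W_I`. -/
def XI (I : Finset V) : Set (V ≃ₗᵢ[ℝ] V) :=
  {w | w ∈ R.Weyl ∧
    ∀ γ, γ ∈ R.Φ → γ ∈ Submodule.span ℝ (I : Set V) → B.IsPos γ → B.IsPos (w γ)}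

/-- `h` is the highest root. -/
def IsHighest (h : V) : Prop :=
  h ∈ R.Φ ∧ ∀ γ ∈ R.Φ, ∀ α ∈ B.Δ, B.coeff γ α ≤ B.coeff h α

/-- `Ĩ = {α ∈ Δ | (h|α) = 0}`, the simple roots orthogonal to the highest root `h`. -/
def Itil (h : V) : Finset V := B.Δ.filter fun α => ⟪h, α⟫ = 0

/-- The level `L(α)` of a long root `α`, where `h` is the highest root:
`L(α) = ht∨(h) − ht∨(α)` if `α > 0` and `L(α) = ht∨(h) − ht∨(α) − 1` if `α < 0`. -/
def level (h α : V) : ℝ :=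
  if B.IsPos α then B.htv h - B.htv α else B.htv h - B.htv α - 1

/-- The elementary step relation `β →_γ α` on long roots (`γ` a positive root):
`α = s_γ(β)` and `L(α) = L(β) + 1`. -/
def Step (h γ β α : V) : Prop :=
  R.IsLong β ∧ R.IsLong α ∧ B.IsPos γ ∧ α = sref γ β ∧
    B.level h α = B.level h β + 1

/-- `g` is the sequence of positive roots of a path
`β = β₀ →_{g 0} β₁ →_{g 1} ⋯ →_{g (n-1)} β_n = α` from `β` to `α`. -/
def IsPathWord (h : V) {n : ℕ} (g : Fin n → V) (β α : V) : Prop :=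
  ∃ c : Fin (n + 1) → V, c 0 = β ∧ c (Fin.last n) = α ∧
    ∀ i : Fin n, B.Step h (g i) (c i.castSucc) (c i.succ)

/-- a path all of whose steps use simple roots -/
def IsSimplePathWord (h : V) {n : ℕ} (g : Fin n → V) (β α : V) : Prop :=
  B.IsPathWord h g β α ∧ ∀ i, g i ∈ B.Δ

/-- there is a path from `β` to `α`, i.e. `α ⪯ β` -/
def HasPath (h β α : V) : Prop := ∃ (n : ℕ) (g : Fin n → V), B.IsPathWord h g β α

/-- there is a simple path from `β` to `α` -/
def HasSimplePath (h β α : V) : Prop :=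
  ∃ (n : ℕ) (g : Fin n → V), B.IsSimplePathWord h g β α

/-- The covering relation `w →_γ w'` for the Bruhat order:
`w' = s_γ w` and `l(w') = l(w) + 1`, for a positive root `γ`. -/
def BStep (γ : V) (w w' : V ≃ₗᵢ[ℝ] V) : Prop :=
  B.IsPos γ ∧ w' = sref γ * w ∧ B.len w' = B.len w + 1

/-- The Bruhat order on `W`: the reflexive–transitive closure of the covering
relations. -/
def bruhatLE : (V ≃ₗᵢ[ℝ] V) → (V ≃ₗᵢ[ℝ] V) → Prop :=
  Relation.ReflTransGen fun w w' => ∃ γ, B.BStep γ w w'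

/-- `x` is an element of `W` with `x(β) = α` of the minimal possible length
`|L(α) − L(β)|` (this is the element `x_{αβ}` when it exists). -/
def MinTake (h β α : V) (x : V ≃ₗᵢ[ℝ] V) : Prop :=
  x ∈ R.Weyl ∧ x β = α ∧ (B.len x : ℝ) = |B.level h α - B.level h β|

/-- `g` is a reduced expression of `x` as a product of simple reflections. -/
def IsReducedWord {n : ℕ} (g : Fin n → V) (x : V ≃ₗᵢ[ℝ] V) : Prop :=
  (∀ i, g i ∈ B.Δ) ∧ x = (List.ofFn fun i => sref (g i)).prod ∧ n = B.len x

/-- The depth of a positive root `β`: the minimal integer `k` such that there is an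
element `w` of `W` of length `k` with `w(β) < 0`. -/
def depth (β : V) : ℕ := sInf {n | ∃ w ∈ R.Weyl, B.len w = n ∧ B.IsNeg (w β)}

end Base

/-! Let `s` be the squared length of `β` and `φ` the claimed value of the depth: `ht∨` if `β` is
long, `ht` if `β` is short (a short root of an irreducible system has squared length `1`). For a
positive root `γ` of squared length `s` and a simple root `α ≠ γ`, `φ (s_α γ) = φ γ - c` where
`c = ⟨α, γ∨⟩`, resp. `c = ⟨γ, α∨⟩`, is the pairing against the longer of the two roots, hence
`|c| ≤ 1`, and `c = 1` as soon as `(γ|α) > 0`.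
If `s_{α₁} ⋯ s_{αₖ} β < 0`, peel off the simple reflections from the right: `φ` drops by at most
one each time while the root stays positive, and the first one to make it negative is `s_α` applied
to `α`, where `φ α = 1`; so `φ β ≤ k`. Conversely, reflecting a non-simple positive root in a simple
root `α` with `(γ|α) > 0` lowers `φ` by exactly one, so after `φ β - 1` such steps one reaches a
simple root, which one more reflection makes negative.
-/

section Reflection

variable {E : Type} [NormedAddCommGroup E] [InnerProductSpace ℝ E]

theorem sref_apply (α v : E) : sref α v = v - cpair v α • α := by
  rw [sref, Submodule.reflection_orthogonal_apply, Submodule.reflection_singleton_apply, cpair]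
  simp only [RCLike.ofReal_real_eq_id, id_eq, ← real_inner_self_eq_norm_sq, real_inner_comm α v]
  module

theorem sref_self (α : E) : sref α α = -α :=
  Submodule.reflection_orthogonalComplement_singleton_eq_neg α

theorem sref_sref (α v : E) : sref α (sref α v) = v :=
  Submodule.reflection_involutive _ v

theorem sref_inv (α : E) : (sref α)⁻¹ = sref α :=
  Submodule.reflection_inv

theorem sref_neg (α : E) : sref (-α) = sref α := by
  simp only [sref, ← Set.neg_singleton, Submodule.span_neg]

theorem sref_map (f : E ≃ₗᵢ[ℝ] E) (α : E) : sref (f α) = f * sref α * f⁻¹ := by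
  ext v
  change sref (f α) v = f (sref α (f.symm v))
  rw [sref_apply, sref_apply, map_sub, map_smul, f.apply_symm_apply, cpair, cpair,
    ← f.inner_map_map (f.symm v), f.apply_symm_apply, f.inner_map_map]

theorem sref_mem_weylP_of_mem {I : Finset E} {α : E} (hα : α ∈ I) : sref α ∈ WeylP I :=
  Subgroup.subset_closure ⟨α, hα, rfl⟩

theorem prod_ofFn_sref_succ {n : ℕ} (g : Fin (n + 1) → E) :
    (List.ofFn fun i => sref (g i)).prod =
      (List.ofFn fun i : Fin n => sref (g i.castSucc)).prod * sref (g (Fin.last n)) := by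
  rw [List.ofFn_succ', List.prod_concat]

end Reflection

namespace NRootSystem

variable {R : NRootSystem V} {α β γ δ v x y : V}

theorem ne_zero_of_mem (hα : α ∈ R.Φ) : α ≠ 0 :=
  fun h => R.zero_not_mem (h ▸ hα)

theorem inner_self_pos_of_mem (hα : α ∈ R.Φ) : 0 < ⟪α, α⟫ :=
  one_pos.trans_le (R.norm_one_le α hα)

theorem neg_mem (hα : α ∈ R.Φ) : -α ∈ R.Φ :=
  sref_self α ▸ R.reflect_mem α hα α hα

theorem exists_int_cpair_eq (hx : x ∈ R.Φ) (hy : y ∈ R.Φ) : ∃ n : ℤ, cpair x y = n := by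
  obtain ⟨n, hn⟩ := R.pairing_int y hy x hx
  exact ⟨n, by rw [cpair, hn, mul_div_cancel_right₀ _ (inner_self_pos_of_mem hy).ne']⟩

theorem inner_self_le_r (hα : α ∈ R.Φ) : ⟪α, α⟫ ≤ R.r :=
  Finset.le_sup' (fun α : V => ⟪α, α⟫) hα

theorem exists_inner_self_eq_r : ∃ δ ∈ R.Φ, ⟪δ, δ⟫ = R.r := by
  obtain ⟨δ, hδ, h⟩ := Finset.exists_mem_eq_sup' R.nonempty fun α : V => ⟪α, α⟫
  exact ⟨δ, hδ, h.symm⟩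

theorem eq_or_eq_neg_of_inner_sq_eq (hx : x ∈ R.Φ) (hy : y ∈ R.Φ)
    (h : ⟪x, y⟫ ^ 2 = ⟪x, x⟫ * ⟪y, y⟫) : x = y ∨ x = -y := by
  have hy0 := inner_self_pos_of_mem hy
  set t := ⟪x, y⟫ / ⟪y, y⟫
  have hxt : x = t • y := by
    have h0 : ⟪x - t • y, x - t • y⟫ = 0 := by
      simp only [t, inner_sub_left, inner_sub_right, real_inner_smul_left, real_inner_smul_right,
        real_inner_comm x y]
      field_simp
      linear_combination -h
    exact sub_eq_zero.mp (inner_self_eq_zero.mp h0)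
  rcases R.reduced y hy t (hxt ▸ hx) with ht | ht
  · exact Or.inl (by rw [hxt, ht, one_smul])
  · exact Or.inr (by rw [hxt, ht, neg_one_smul])

theorem cpair_mul_cpair (hx : x ∈ R.Φ) (hy : y ∈ R.Φ) :
    cpair x y * cpair y x = 4 * ⟪x, y⟫ ^ 2 / (⟪x, x⟫ * ⟪y, y⟫) := by
  have := (inner_self_pos_of_mem hx).ne'
  have := (inner_self_pos_of_mem hy).ne'
  rw [cpair, cpair, real_inner_comm y x]
  field_simp
  ring

theorem cpair_mul_cpair_lt_four (hx : x ∈ R.Φ) (hy : y ∈ R.Φ) (h₁ : x ≠ y) (h₂ : x ≠ -y) :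
    cpair x y * cpair y x < 4 := by
  have hpos := mul_pos (inner_self_pos_of_mem hx) (inner_self_pos_of_mem hy)
  have hlt : ⟪x, y⟫ ^ 2 < ⟪x, x⟫ * ⟪y, y⟫ := by
    refine lt_of_le_of_ne ?_ fun h => ?_
    · nlinarith [real_inner_mul_inner_self_le x y]
    · rcases eq_or_eq_neg_of_inner_sq_eq hx hy h with h | h
      exacts [h₁ h, h₂ h]
  rw [cpair_mul_cpair hx hy, div_lt_iff₀ hpos]
  linarith

theorem abs_cpair_le_one (hx : x ∈ R.Φ) (hy : y ∈ R.Φ) (hle : ⟪x, x⟫ ≤ ⟪y, y⟫)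
    (h₁ : x ≠ y) (h₂ : x ≠ -y) : |cpair x y| ≤ 1 := by
  obtain ⟨m, hm⟩ := exists_int_cpair_eq hx hy
  obtain ⟨m', hm'⟩ := exists_int_cpair_eq hy hx
  have hlt := cpair_mul_cpair_lt_four hx hy h₁ h₂
  -- `cpair y x / cpair x y = ⟪y, y⟫ / ⟪x, x⟫ ≥ 1`, so `cpair x y ^ 2 ≤ cpair x y * cpair y x`
  have hsq : cpair x y ^ 2 ≤ cpair x y * cpair y x := by
    have hx0 := inner_self_pos_of_mem hx
    have hy0 := inner_self_pos_of_mem hy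
    rw [cpair_mul_cpair hx hy, cpair, div_pow, div_le_div_iff₀ (by positivity) (by positivity)]
    nlinarith [mul_nonneg (mul_nonneg (sq_nonneg ⟪x, y⟫) hy0.le) (sub_nonneg.mpr hle)]
  rw [hm, hm'] at hsq hlt
  rw [hm]
  have : m ^ 2 < 4 := by exact_mod_cast hsq.trans_lt hlt
  have : |m| ≤ 1 := by nlinarith [sq_abs m, abs_nonneg m]
  exact_mod_cast this

theorem cpair_eq_one_of_inner_pos (hx : x ∈ R.Φ) (hy : y ∈ R.Φ) (hle : ⟪x, x⟫ ≤ ⟪y, y⟫)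
    (h₁ : x ≠ y) (h₂ : x ≠ -y) (hpos : 0 < ⟪x, y⟫) : cpair x y = 1 := by
  obtain ⟨m, hm⟩ := exists_int_cpair_eq hx hy
  have habs := abs_cpair_le_one hx hy hle h₁ h₂
  have hcpos : 0 < cpair x y := div_pos (by linarith) (inner_self_pos_of_mem hy)
  rw [hm] at habs hcpos ⊢
  have : |m| ≤ 1 := by exact_mod_cast habs
  have : 0 < m := by exact_mod_cast hcpos
  have : m = 1 := by rw [abs_le] at *; omega
  simp [this]

theorem two_mul_inner_self_le_and_le_three_mul (hx : x ∈ R.Φ) (hy : y ∈ R.Φ) (hxy : ⟪x, y⟫ ≠ 0)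
    (hlt : ⟪x, x⟫ < ⟪y, y⟫) : 2 * ⟪x, x⟫ ≤ ⟪y, y⟫ ∧ ⟪y, y⟫ ≤ 3 * ⟪x, x⟫ := by
  have h₁ : x ≠ y := by rintro rfl; exact hlt.false
  have h₂ : x ≠ -y := by rintro rfl; simp at hlt
  have hx0 := inner_self_pos_of_mem hx
  have hy0 := inner_self_pos_of_mem hy
  obtain ⟨m, hm⟩ := exists_int_cpair_eq hx hy
  obtain ⟨m', hm'⟩ := exists_int_cpair_eq hy hx
  have hlt4 := cpair_mul_cpair_lt_four hx hy h₁ h₂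
  -- `cpair x y = ±1`, hence `⟪y, y⟫ = cpair x y * cpair y x * ⟪x, x⟫`
  have hm1 : (m : ℝ) ^ 2 = 1 := by
    have habs : |(m : ℝ)| ≤ 1 := hm ▸ abs_cpair_le_one hx hy hlt.le h₁ h₂
    have hm0 : (m : ℝ) ≠ 0 := by
      rw [← hm, cpair]
      exact div_ne_zero (mul_ne_zero two_ne_zero hxy) hy0.ne'
    have : |m| ≤ 1 := by exact_mod_cast habs
    have : m ≠ 0 := by exact_mod_cast hm0
    have : m = 1 ∨ m = -1 := by rw [abs_le] at *; omega
    rcases this with h | h <;> simp [h]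
  have e₁ : (m : ℝ) * ⟪y, y⟫ = 2 * ⟪x, y⟫ := by rw [← hm, cpair]; field_simp
  have e₂ : 2 * ⟪x, y⟫ = (m' : ℝ) * ⟪x, x⟫ := by rw [← hm', cpair, real_inner_comm]; field_simp
  have hyy : ⟪y, y⟫ = (m * m' : ℝ) * ⟪x, x⟫ := by
    linear_combination (-⟪y, y⟫) * hm1 + (m : ℝ) * e₁ + (m : ℝ) * e₂
  rw [hm, hm'] at hlt4
  have hk1 : 1 < m * m' := by
    have : (1 : ℝ) < m * m' := by nlinarith
    exact_mod_cast this
  have hk4 : m * m' < 4 := by exact_mod_cast hlt4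
  have h2 : (2 : ℝ) ≤ m * m' := by exact_mod_cast (by omega : 2 ≤ m * m')
  have h3 : (m * m' : ℝ) ≤ 3 := by exact_mod_cast (by omega : m * m' ≤ 3)
  constructor <;> nlinarith

theorem sref_mem_weyl (hα : α ∈ R.Φ) : sref α ∈ R.Weyl :=
  Subgroup.subset_closure ⟨α, hα, rfl⟩

theorem apply_mem_of_mem_weyl {w : V ≃ₗᵢ[ℝ] V} (hw : w ∈ R.Weyl) (hγ : γ ∈ R.Φ) : w γ ∈ R.Φ := by
  induction hw using Subgroup.closure_induction'' generalizing γ with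
  | mem _ h => obtain ⟨α, hα, rfl⟩ := h; exact R.reflect_mem α hα γ hγ
  | inv_mem _ h => obtain ⟨α, hα, rfl⟩ := h; rw [sref_inv]; exact R.reflect_mem α hα γ hγ
  | one => exact hγ
  | mul _ _ _ _ ihx ihy => exact ihx (ihy hγ)

variable (R) in
def weylOrbit (β : V) : Set V := {v | ∃ w ∈ R.Weyl, w β = v}

theorem apply_mem_weylOrbit {w : V ≃ₗᵢ[ℝ] V} (hw : w ∈ R.Weyl) : w β ∈ R.weylOrbit β :=
  ⟨w, hw, rfl⟩

theorem span_weylOrbit_le_orthogonal (h : ∀ v ∈ R.weylOrbit β, ⟪v, δ⟫ = 0) :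
    Submodule.span ℝ (R.weylOrbit β) ≤ (ℝ ∙ δ)ᗮ :=
  Submodule.span_le.mpr fun v hv => Submodule.mem_orthogonal_singleton_iff_inner_left.mpr (h v hv)

theorem mem_span_weylOrbit_of_inner_ne (hδ : δ ∈ R.Φ) (hv : v ∈ R.weylOrbit β)
    (h : ⟪v, δ⟫ ≠ 0) : δ ∈ Submodule.span ℝ (R.weylOrbit β) := by
  obtain ⟨w, hw, rfl⟩ := hv
  have hsv := apply_mem_weylOrbit (β := β) (mul_mem (sref_mem_weyl hδ) hw)
  have hc : cpair (w β) δ ≠ 0 := div_ne_zero (mul_ne_zero two_ne_zero h)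
    (inner_self_pos_of_mem hδ).ne'
  have hsub : cpair (w β) δ • δ = w β - sref δ (w β) := by rw [sref_apply]; abel
  have hmem : cpair (w β) δ • δ ∈ Submodule.span ℝ (R.weylOrbit β) := hsub ▸
    Submodule.sub_mem _ (Submodule.subset_span (apply_mem_weylOrbit hw)) (Submodule.subset_span hsv)
  exact (Submodule.smul_mem_iff _ hc).mp hmem

theorem mem_span_weylOrbit (hβ : β ∈ R.Φ) (hγ : γ ∈ R.Φ) :
    γ ∈ Submodule.span ℝ (R.weylOrbit β) := by
  set U := Submodule.span ℝ (R.weylOrbit β)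
  -- otherwise the roots outside `U` are orthogonal to those inside, against irreducibility
  by_contra hγU
  obtain ⟨α, hαS, δ, hδS, hαδ⟩ := R.irreducible (R.Φ.filter (· ∈ U)) (Finset.filter_subset _ _)
    ⟨β, Finset.mem_filter.mpr ⟨hβ, Submodule.subset_span (apply_mem_weylOrbit (one_mem _))⟩⟩
    ⟨γ, Finset.mem_sdiff.mpr ⟨hγ, fun h => hγU (Finset.mem_filter.mp h).2⟩⟩
  obtain ⟨hδ, hδU⟩ := Finset.mem_sdiff.mp hδS
  have hδU : δ ∉ U := fun h => hδU (Finset.mem_filter.mpr ⟨hδ, h⟩)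
  have hUδ : U ≤ (ℝ ∙ δ)ᗮ := span_weylOrbit_le_orthogonal fun v hv => by
    by_contra h
    exact hδU (mem_span_weylOrbit_of_inner_ne hδ hv h)
  exact hαδ (Submodule.mem_orthogonal_singleton_iff_inner_left.mp
    (hUδ (Finset.mem_filter.mp hαS).2))

theorem exists_inner_self_eq_inner_ne (hβ : β ∈ R.Φ) (hγ : γ ∈ R.Φ) :
    ∃ v ∈ R.Φ, ⟪v, v⟫ = ⟪β, β⟫ ∧ ⟪v, γ⟫ ≠ 0 := by
  by_contra! h
  have hγγ : ⟪γ, γ⟫ = 0 := Submodule.mem_orthogonal_singleton_iff_inner_left.mp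
    (span_weylOrbit_le_orthogonal (by
      rintro _ ⟨w, hw, rfl⟩
      exact h (w β) (apply_mem_of_mem_weyl hw hβ) (w.inner_map_map β β)) (mem_span_weylOrbit hβ hγ))
  exact (inner_self_pos_of_mem hγ).ne' hγγ

theorem inner_self_eq_one_of_lt_r (hβ : β ∈ R.Φ) (h : ⟪β, β⟫ < R.r) : ⟪β, β⟫ = 1 := by
  -- A root of length `s ∈ (1, r)` has conjugates meeting a shortest and a longest root, giving
  -- `2 ≤ s` and `2 s ≤ r`, while a shortest root has a conjugate meeting a longest one: `r ≤ 3`.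
  by_contra hne
  have h1 : 1 < ⟪β, β⟫ := (R.norm_one_le β hβ).lt_of_ne' hne
  obtain ⟨u, hu, huu⟩ := R.exists_norm_one
  obtain ⟨δ, hδ, hδδ⟩ := R.exists_inner_self_eq_r
  obtain ⟨z₁, hz₁, hz₁z₁, hz₁u⟩ := exists_inner_self_eq_inner_ne hβ hu
  obtain ⟨z₂, hz₂, hz₂z₂, hz₂δ⟩ := exists_inner_self_eq_inner_ne hβ hδ
  obtain ⟨z₃, hz₃, hz₃z₃, hz₃δ⟩ := exists_inner_self_eq_inner_ne hu hδ
  have h₁ := two_mul_inner_self_le_and_le_three_mul hu hz₁ (by rwa [real_inner_comm]) (by linarith)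
  have h₂ := two_mul_inner_self_le_and_le_three_mul hz₂ hδ hz₂δ (by linarith)
  have h₃ := two_mul_inner_self_le_and_le_three_mul hz₃ hδ hz₃δ (by linarith)
  linarith [h₁.1, h₂.1, h₃.2]

end NRootSystem

namespace Base

variable {R : NRootSystem V} (B : Base R) {α β γ δ : V}

theorem coeff_eq_of_eq_sum (hγ : γ ∈ R.Φ) {c : V → ℝ} (h : γ = ∑ α ∈ B.Δ, c α • α)
    (hδ : δ ∈ B.Δ) : (B.coeff γ δ : ℝ) = c δ := by
  have h0 : ∑ α ∈ B.Δ, ((B.coeff γ α : ℝ) - c α) • α = 0 := by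
    simp only [sub_smul, Finset.sum_sub_distrib, ← B.coeff_spec γ hγ, ← h, sub_self]
  have := linearIndependent_iff'.mp B.indep Finset.univ (fun a => (B.coeff γ a : ℝ) - c a)
    (by rw [← h0]; exact Finset.sum_attach B.Δ fun α => ((B.coeff γ α : ℝ) - c α) • α)
    ⟨δ, hδ⟩ (Finset.mem_univ _)
  exact sub_eq_zero.mp this

theorem coeff_of_mem (hα : α ∈ B.Δ) (hδ : δ ∈ B.Δ) :
    (B.coeff α δ : ℝ) = if δ = α then 1 else 0 := by
  refine B.coeff_eq_of_eq_sum (B.subset hα) (c := fun δ => if δ = α then 1 else 0) ?_ hδ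
  simp only [ite_smul, one_smul, zero_smul, Finset.sum_ite_eq', if_pos hα]

theorem coeff_neg (hγ : γ ∈ R.Φ) (hδ : δ ∈ B.Δ) : B.coeff (-γ) δ = -B.coeff γ δ := by
  have := B.coeff_eq_of_eq_sum (R.neg_mem hγ) (c := fun α => -(B.coeff γ α : ℝ))
    (by simp only [neg_smul, Finset.sum_neg_distrib, ← B.coeff_spec γ hγ]) hδ
  exact_mod_cast this

theorem coeff_sref (hα : α ∈ B.Δ) (hγ : γ ∈ R.Φ) (hδ : δ ∈ B.Δ) :
    (B.coeff (sref α γ) δ : ℝ) = B.coeff γ δ - if δ = α then cpair γ α else 0 := by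
  refine B.coeff_eq_of_eq_sum (R.reflect_mem α (B.subset hα) γ hγ)
    (c := fun δ => B.coeff γ δ - if δ = α then cpair γ α else 0) ?_ hδ
  simp only [sub_smul, Finset.sum_sub_distrib, ite_smul, zero_smul, Finset.sum_ite_eq', if_pos hα]
  rw [← B.coeff_spec γ hγ, sref_apply]

theorem sum_coeff_mul_of_mem (hα : α ∈ B.Δ) (c : V → ℝ) :
    ∑ δ ∈ B.Δ, (B.coeff α δ : ℝ) * c δ = c α := by
  rw [Finset.sum_congr rfl fun δ hδ => by rw [B.coeff_of_mem hα hδ]]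
  simp only [ite_mul, one_mul, zero_mul, Finset.sum_ite_eq', if_pos hα]

theorem sum_coeff_sref_mul (hα : α ∈ B.Δ) (hγ : γ ∈ R.Φ) (c : V → ℝ) :
    ∑ δ ∈ B.Δ, (B.coeff (sref α γ) δ : ℝ) * c δ =
      ∑ δ ∈ B.Δ, (B.coeff γ δ : ℝ) * c δ - cpair γ α * c α := by
  rw [Finset.sum_congr rfl fun δ hδ => by rw [B.coeff_sref hα hγ hδ]]
  simp only [sub_mul, Finset.sum_sub_distrib, ite_mul, zero_mul, Finset.sum_ite_eq', if_pos hα]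

theorem ht_of_mem (hα : α ∈ B.Δ) : B.ht α = 1 := by
  have := B.sum_coeff_mul_of_mem hα 1
  simp only [Pi.one_apply, mul_one] at this
  rw [ht]
  exact_mod_cast this

theorem htv_of_mem (hα : α ∈ B.Δ) : B.htv α = 1 := by
  rw [htv, ← Finset.sum_div, B.sum_coeff_mul_of_mem hα fun δ => ⟪δ, δ⟫,
    div_self (R.inner_self_pos_of_mem (B.subset hα)).ne']

theorem ht_sref (hα : α ∈ B.Δ) (hγ : γ ∈ R.Φ) :
    (B.ht (sref α γ) : ℝ) = B.ht γ - cpair γ α := by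
  have := B.sum_coeff_sref_mul hα hγ 1
  simp only [Pi.one_apply, mul_one] at this
  simp only [ht, Int.cast_sum, this]

theorem htv_sref (hα : α ∈ B.Δ) (hγ : γ ∈ R.Φ) :
    B.htv (sref α γ) = B.htv γ - cpair α γ := by
  rw [htv, htv, ← Finset.sum_div, ← Finset.sum_div, (sref α).inner_map_map,
    B.sum_coeff_sref_mul hα hγ fun δ => ⟪δ, δ⟫, sub_div, cpair, cpair, real_inner_comm γ α]
  have := (R.inner_self_pos_of_mem (B.subset hα)).ne'
  field_simp

theorem isPos_or_isNeg (hγ : γ ∈ R.Φ) : B.IsPos γ ∨ B.IsNeg γ :=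
  (B.coeff_sign γ hγ).imp (⟨hγ, ·⟩) (⟨hγ, ·⟩)

theorem isPos_of_mem (hα : α ∈ B.Δ) : B.IsPos α := by
  refine ⟨B.subset hα, fun δ hδ => ?_⟩
  have : (0 : ℝ) ≤ B.coeff α δ := by rw [B.coeff_of_mem hα hδ]; split_ifs <;> norm_num
  exact_mod_cast this

theorem isNeg_neg (hγ : B.IsPos γ) : B.IsNeg (-γ) :=
  ⟨R.neg_mem hγ.1, fun δ hδ => by simpa [B.coeff_neg hγ.1 hδ] using hγ.2 δ hδ⟩

theorem isPos_neg (hγ : B.IsNeg γ) : B.IsPos (-γ) :=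
  ⟨R.neg_mem hγ.1, fun δ hδ => by simpa [B.coeff_neg hγ.1 hδ] using hγ.2 δ hδ⟩

theorem ht_pos (hγ : B.IsPos γ) : 0 < B.ht γ := by
  refine (Finset.sum_nonneg hγ.2).lt_of_ne fun h => R.ne_zero_of_mem hγ.1 ?_
  have hz := (Finset.sum_eq_zero_iff_of_nonneg hγ.2).mp h.symm
  rw [B.coeff_spec γ hγ.1]
  exact Finset.sum_eq_zero fun δ hδ => by simp [hz δ hδ]

theorem ht_nonpos (hγ : B.IsNeg γ) : B.ht γ ≤ 0 :=
  Finset.sum_nonpos hγ.2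

variable {B} in
theorem IsPos.not_isNeg (hγ : B.IsPos γ) : ¬B.IsNeg γ :=
  fun h => (B.ht_pos hγ).not_ge (B.ht_nonpos h)

theorem ne_neg_of_isPos (hγ : B.IsPos γ) (hα : α ∈ B.Δ) : γ ≠ -α := by
  rintro rfl
  exact (B.isPos_of_mem hα).not_isNeg (by simpa using B.isNeg_neg hγ)

theorem exists_inner_pos (hγ : B.IsPos γ) : ∃ α ∈ B.Δ, 0 < ⟪γ, α⟫ := by
  by_contra! h
  have : ⟪γ, γ⟫ ≤ 0 := calc
    ⟪γ, γ⟫ = ⟪γ, ∑ α ∈ B.Δ, (B.coeff γ α : ℝ) • α⟫ := by rw [← B.coeff_spec γ hγ.1]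
    _ = ∑ α ∈ B.Δ, (B.coeff γ α : ℝ) * ⟪γ, α⟫ := by simp only [inner_sum, real_inner_smul_right]
    _ ≤ 0 := Finset.sum_nonpos fun α hα =>
      mul_nonpos_of_nonneg_of_nonpos (by exact_mod_cast hγ.2 α hα) (h α hα)
  exact this.not_gt (R.inner_self_pos_of_mem hγ.1)

theorem isPos_sref (hα : α ∈ B.Δ) (hγ : B.IsPos γ) (hne : γ ≠ α) : B.IsPos (sref α γ) := by
  refine (B.isPos_or_isNeg (R.reflect_mem α (B.subset hα) γ hγ.1)).resolve_right fun hneg => ?_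
  -- otherwise every coordinate of `γ` off `α` is both `≥ 0` and `≤ 0`, so `γ` is a multiple of `α`
  have hz : ∀ δ ∈ B.Δ, δ ≠ α → B.coeff γ δ = 0 := fun δ hδ hδα => by
    have h := B.coeff_sref hα hγ.1 hδ
    rw [if_neg hδα, sub_zero] at h
    have : (B.coeff γ δ : ℝ) ≤ 0 := h ▸ (by exact_mod_cast hneg.2 δ hδ)
    exact le_antisymm (by exact_mod_cast this) (hγ.2 δ hδ)
  have hγα : γ = (B.coeff γ α : ℝ) • α := by
    conv_lhs => rw [B.coeff_spec γ hγ.1]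
    exact Finset.sum_eq_single α (fun δ hδ hδα => by simp [hz δ hδ hδα]) (absurd hα)
  rcases R.reduced α (B.subset hα) _ (hγα ▸ hγ.1) with h | h
  · exact hne (by rw [hγα, h, one_smul])
  · have : (0 : ℝ) ≤ B.coeff γ α := by exact_mod_cast hγ.2 α hα
    linarith

theorem eq_of_isNeg_sref (hα : α ∈ B.Δ) (hγ : B.IsPos γ) (h : B.IsNeg (sref α γ)) : γ = α :=
  by_contra fun hne => (B.isPos_sref hα hγ hne).not_isNeg h

theorem ht_sref_lt (hα : α ∈ B.Δ) (hγ : γ ∈ R.Φ) (hpos : 0 < ⟪γ, α⟫) :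
    B.ht (sref α γ) < B.ht γ := by
  have h := B.ht_sref hα hγ
  have : 0 < cpair γ α := div_pos (by linarith) (R.inner_self_pos_of_mem (B.subset hα))
  exact_mod_cast (h ▸ sub_lt_self _ this : (B.ht (sref α γ) : ℝ) < B.ht γ)

variable {B} in
theorem IsPos.induction_on {P : V → Prop} (hγ : B.IsPos γ) (simple : ∀ α ∈ B.Δ, P α)
    (step : ∀ γ α, B.IsPos γ → α ∈ B.Δ → γ ≠ α → 0 < ⟪γ, α⟫ → B.IsPos (sref α γ) →
      P (sref α γ) → P γ) : P γ := by
  induction hn : (B.ht γ).toNat using Nat.strong_induction_on generalizing γ with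
  | _ n ih =>
    by_cases hmem : γ ∈ B.Δ
    · exact simple γ hmem
    obtain ⟨α, hα, hpos⟩ := B.exists_inner_pos hγ
    have hne : γ ≠ α := fun h => hmem (h ▸ hα)
    have hγ' := B.isPos_sref hα hγ hne
    have hlt := B.ht_sref_lt hα hγ.1 hpos
    have := B.ht_pos hγ'
    exact step γ α hγ hα hne hpos hγ' (ih _ (by omega) hγ' rfl)

theorem htv_le_htv_sref_add_one (hγ : B.IsPos γ) (hα : α ∈ B.Δ) (hle : ⟪α, α⟫ ≤ ⟪γ, γ⟫)
    (hne : γ ≠ α) : B.htv γ ≤ B.htv (sref α γ) + 1 := by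
  have := R.abs_cpair_le_one (B.subset hα) hγ.1 hle hne.symm
    fun h => B.ne_neg_of_isPos hγ hα (by rw [h, neg_neg])
  rw [B.htv_sref hα hγ.1]
  linarith [(abs_le.mp this).2]

theorem htv_sref_of_inner_pos (hγ : B.IsPos γ) (hα : α ∈ B.Δ) (hle : ⟪α, α⟫ ≤ ⟪γ, γ⟫)
    (hne : γ ≠ α) (hpos : 0 < ⟪γ, α⟫) : B.htv (sref α γ) = B.htv γ - 1 := by
  rw [B.htv_sref hα hγ.1, R.cpair_eq_one_of_inner_pos (B.subset hα) hγ.1 hle hne.symm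
    (fun h => B.ne_neg_of_isPos hγ hα (by rw [h, neg_neg])) (by rwa [real_inner_comm])]

theorem ht_le_ht_sref_add_one (hγ : B.IsPos γ) (hα : α ∈ B.Δ) (hle : ⟪γ, γ⟫ ≤ ⟪α, α⟫)
    (hne : γ ≠ α) : (B.ht γ : ℝ) ≤ B.ht (sref α γ) + 1 := by
  have := R.abs_cpair_le_one hγ.1 (B.subset hα) hle hne (B.ne_neg_of_isPos hγ hα)
  rw [B.ht_sref hα hγ.1]
  linarith [(abs_le.mp this).2]

theorem ht_sref_of_inner_pos (hγ : B.IsPos γ) (hα : α ∈ B.Δ) (hle : ⟪γ, γ⟫ ≤ ⟪α, α⟫)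
    (hne : γ ≠ α) (hpos : 0 < ⟪γ, α⟫) : (B.ht (sref α γ) : ℝ) = B.ht γ - 1 := by
  rw [B.ht_sref hα hγ.1,
    R.cpair_eq_one_of_inner_pos hγ.1 (B.subset hα) hle hne (B.ne_neg_of_isPos hγ hα) hpos]

theorem sref_mem_weylP (hγ : γ ∈ R.Φ) : sref γ ∈ WeylP B.Δ := by
  have hpos : ∀ γ, B.IsPos γ → sref γ ∈ WeylP B.Δ := fun γ hγ =>
    hγ.induction_on (P := fun γ => sref γ ∈ WeylP B.Δ) (fun α hα => sref_mem_weylP_of_mem hα)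
      fun γ α _ hα _ _ _ ih => by
        have hs := sref_mem_weylP_of_mem hα
        rw [← sref_sref α γ, sref_map]
        exact mul_mem (mul_mem hs ih) (inv_mem hs)
  rcases B.isPos_or_isNeg hγ with h | h
  · exact hpos γ h
  · rw [← sref_neg]
    exact hpos _ (B.isPos_neg h)

theorem weyl_le_weylP : R.Weyl ≤ WeylP B.Δ :=
  (Subgroup.closure_le _).mpr <| by
    rintro _ ⟨γ, hγ, rfl⟩
    exact B.sref_mem_weylP hγ

theorem prod_mem_weyl {n : ℕ} {g : Fin n → V} (hg : ∀ i, g i ∈ B.Δ) :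
    (List.ofFn fun i => sref (g i)).prod ∈ R.Weyl :=
  list_prod_mem fun _ hx => by
    obtain ⟨i, rfl⟩ := List.mem_ofFn.mp hx
    exact R.sref_mem_weyl (B.subset (hg i))

theorem exists_word {w : V ≃ₗᵢ[ℝ] V} (hw : w ∈ WeylP B.Δ) :
    ∃ (n : ℕ) (g : Fin n → V), (∀ i, g i ∈ B.Δ) ∧ w = (List.ofFn fun i => sref (g i)).prod := by
  have hcons : ∀ α ∈ B.Δ, ∀ {w : V ≃ₗᵢ[ℝ] V}, (∃ (n : ℕ) (g : Fin n → V), (∀ i, g i ∈ B.Δ) ∧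
      w = (List.ofFn fun i => sref (g i)).prod) → ∃ (n : ℕ) (g : Fin n → V), (∀ i, g i ∈ B.Δ) ∧
      sref α * w = (List.ofFn fun i => sref (g i)).prod := by
    rintro α hα _ ⟨n, g, hg, rfl⟩
    exact ⟨n + 1, Fin.cons α g, Fin.cases hα hg, by simp [List.ofFn_succ]⟩
  induction hw using Subgroup.closure_induction_left with
  | one => exact ⟨0, Fin.elim0, fun i => i.elim0, by simp⟩
  | mul_left _ h _ _ ih => obtain ⟨α, hα, rfl⟩ := h; exact hcons α hα ih
  | inv_mul_cancel _ h _ _ ih => obtain ⟨α, hα, rfl⟩ := h; rw [sref_inv]; exact hcons α hα ih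

theorem exists_word_len {w : V ≃ₗᵢ[ℝ] V} (hw : w ∈ R.Weyl) :
    ∃ g : Fin (B.len w) → V, (∀ i, g i ∈ B.Δ) ∧ w = (List.ofFn fun i => sref (g i)).prod :=
  Nat.sInf_mem (B.exists_word (B.weyl_le_weylP hw))

theorem len_prod_le {n : ℕ} {g : Fin n → V} (hg : ∀ i, g i ∈ B.Δ) :
    B.len (List.ofFn fun i => sref (g i)).prod ≤ n :=
  Nat.sInf_le ⟨g, hg, rfl⟩

section Depth

variable (φ : V → ℝ) {s : ℝ}

theorem le_of_isNeg_prod (hsimple : ∀ α ∈ B.Δ, ⟪α, α⟫ = s → φ α ≤ 1)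
    (hstep : ∀ γ, B.IsPos γ → ⟪γ, γ⟫ = s → ∀ α ∈ B.Δ, γ ≠ α → φ γ ≤ φ (sref α γ) + 1)
    {n : ℕ} (g : Fin n → V) (hg : ∀ i, g i ∈ B.Δ) (hγ : B.IsPos γ) (hγs : ⟪γ, γ⟫ = s)
    (hneg : B.IsNeg ((List.ofFn fun i => sref (g i)).prod γ)) : φ γ ≤ n := by
  induction n generalizing γ with
  | zero => exact absurd (by simpa using hneg) hγ.not_isNeg
  | succ n ih =>
    have hα := hg (Fin.last n)
    rw [prod_ofFn_sref_succ, LinearIsometryEquiv.coe_mul, Function.comp_apply] at hneg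
    rcases B.isPos_or_isNeg (R.reflect_mem _ (B.subset hα) γ hγ.1) with hγ' | hγ'
    · have hne : γ ≠ g (Fin.last n) := by
        rintro rfl
        rw [sref_self] at hγ'
        exact hγ'.not_isNeg (B.isNeg_neg hγ)
      have := ih _ (fun i => hg _) hγ' ((sref _).inner_map_map γ γ ▸ hγs) hneg
      push_cast
      linarith [hstep γ hγ hγs _ hα hne]
    · rw [B.eq_of_isNeg_sref hα hγ hγ'] at hγs ⊢
      push_cast
      linarith [hsimple _ hα hγs]

theorem exists_prod_isNeg (hsimple : ∀ α ∈ B.Δ, ⟪α, α⟫ = s → φ α = 1)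
    (hstep : ∀ γ, B.IsPos γ → ⟪γ, γ⟫ = s → ∀ α ∈ B.Δ, γ ≠ α → 0 < ⟪γ, α⟫ →
      φ (sref α γ) = φ γ - 1)
    (hγ : B.IsPos γ) (hγs : ⟪γ, γ⟫ = s) : ∃ (n : ℕ) (g : Fin n → V), (∀ i, g i ∈ B.Δ) ∧
      (n : ℝ) = φ γ ∧ B.IsNeg ((List.ofFn fun i => sref (g i)).prod γ) := by
  revert hγs
  apply hγ.induction_on
  · intro α hα hαs
    refine ⟨1, fun _ => α, fun _ => hα, by simp [hsimple α hα hαs], ?_⟩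
    simpa [sref_self] using B.isNeg_neg (B.isPos_of_mem hα)
  · intro γ α hγ hα hne hpos _ ih hγs
    obtain ⟨n, g, hg, hn, hneg⟩ := ih ((sref α).inner_map_map γ γ ▸ hγs)
    refine ⟨n + 1, Fin.snoc g α, Fin.lastCases (by simpa using hα) (by simpa using hg), ?_, ?_⟩
    · push_cast
      linarith [hstep γ hγ hγs α hα hne hpos]
    · rw [prod_ofFn_sref_succ]
      simpa only [Fin.snoc_castSucc, Fin.snoc_last, LinearIsometryEquiv.coe_mul,
        Function.comp_apply] using hneg

theorem depth_eq_of_sref (hβ : B.IsPos β) (hβs : ⟪β, β⟫ = s)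
    (hsimple : ∀ α ∈ B.Δ, ⟪α, α⟫ = s → φ α = 1)
    (hle : ∀ γ, B.IsPos γ → ⟪γ, γ⟫ = s → ∀ α ∈ B.Δ, γ ≠ α → φ γ ≤ φ (sref α γ) + 1)
    (heq : ∀ γ, B.IsPos γ → ⟪γ, γ⟫ = s → ∀ α ∈ B.Δ, γ ≠ α → 0 < ⟪γ, α⟫ →
      φ (sref α γ) = φ γ - 1) :
    (B.depth β : ℝ) = φ β := by
  obtain ⟨n, g, hg, hn, hneg⟩ := B.exists_prod_isNeg φ hsimple heq hβ hβs
  have hmem : B.len (List.ofFn fun i => sref (g i)).prod ∈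
      {n | ∃ w ∈ R.Weyl, B.len w = n ∧ B.IsNeg (w β)} := ⟨_, B.prod_mem_weyl hg, rfl, hneg⟩
  obtain ⟨w, hw, hwd, hwβ⟩ := Nat.sInf_mem ⟨_, hmem⟩
  obtain ⟨g', hg', hwg⟩ := B.exists_word_len hw
  rw [hwg] at hwβ
  have hupper : B.depth β ≤ n := (Nat.sInf_le hmem).trans (B.len_prod_le hg)
  have hlower := B.le_of_isNeg_prod φ (fun α hα hαs => (hsimple α hα hαs).le) hle g' hg' hβ hβs hwβ
  rw [hwd] at hlower
  change φ β ≤ B.depth β at hlower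
  have : (B.depth β : ℝ) ≤ n := by exact_mod_cast hupper
  linarith

end Depth

end Base

/-- for a positive long root `β`, the depth of `β` (the minimal `k`
such that some `w ∈ W` of length `k` has `w(β) < 0`) equals `ht∨(β)`, the height of
the coroot `β∨`; for a positive short root `β`, the depth of `β` equals its height
`ht(β)`. -/
theorem depth_eq_height (R : NRootSystem V) (B : Base R) {β : V} (hβpos : B.IsPos β) :
    (R.IsLong β → (B.depth β : ℝ) = B.htv β) ∧
    (R.IsShort β → (B.depth β : ℤ) = B.ht β) := by
  refine ⟨fun hlong => ?_, fun hshort => ?_⟩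
  · have hle : ∀ α ∈ B.Δ, ⟪α, α⟫ ≤ R.r := fun α hα => R.inner_self_le_r (B.subset hα)
    exact B.depth_eq_of_sref B.htv hβpos hlong.2 (fun α hα _ => B.htv_of_mem hα)
      (fun γ hγ hγr α hα hne => B.htv_le_htv_sref_add_one hγ hα (hγr ▸ hle α hα) hne)
      (fun γ hγ hγr α hα hne hpos => B.htv_sref_of_inner_pos hγ hα (hγr ▸ hle α hα) hne hpos)
  · have hge : ∀ α ∈ B.Δ, 1 ≤ ⟪α, α⟫ := fun α hα => R.norm_one_le α (B.subset hα)
    have h := B.depth_eq_of_sref (fun γ => (B.ht γ : ℝ)) hβpos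
      (R.inner_self_eq_one_of_lt_r hshort.1 hshort.2) (fun α hα _ => by simp [B.ht_of_mem hα])
      (fun γ hγ hγ1 α hα hne => B.ht_le_ht_sref_add_one hγ hα (hγ1 ▸ hge α hα) hne)
      (fun γ hγ hγ1 α hα hne hpos => B.ht_sref_of_inner_pos hγ hα (hγ1 ▸ hge α hα) hne hpos)
    exact_mod_cast h
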